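/- Let f : ℤ^d → ℝ≥0 with ∑'_x f(x) = 1 and let f^{*n} denote its n-fold convolution (f^{*1} = f, f^{*(n+1)}(z) = ∑'_w f(w)·f^{*n}(z−w)). Assume irreducibility: for every e ∈ ℤ^d there exists n ≥ 1 with f^{*n}(e) > 0. Let h : ℤ^d → ℝ with h(x) > 0 for all x, such that for every x the family (y ↦ f(y−x)·h(y)) is summable and h(x) = ∑'_y f(y−x)·h(y), and assume h is minimal: every harmonic function g (in the same sense) with 0 ≤ g ≤ h equals c·h for some constant c ≥ 0. Then there exists u ∈ ℝ^d such that h(x) = h(0)·exp(⟨u,x⟩) for all x ∈ ℤ^d. -/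

import Mathlib

open scoped NNReal ENNReal

/-- `iterConv f n` is the `(n+1)`-fold convolution `f^{*(n+1)}` of the step
distribution `f` on `ℤ^d`: `f^{*1} = f` and `f^{*(n+1)}(z) = ∑ w, f(w) f^{*n}(z−w)`. -/
noncomputable def iterConv {d : ℕ} (f : (Fin d → ℤ) → ℝ≥0) : ℕ → (Fin d → ℤ) → ℝ≥0
  | 0 => f
  | (n + 1) => fun z => ∑' w, f w * iterConv f n (z - w)

lemma iter_aux {d : ℕ} (f : (Fin d → ℤ) → ℝ≥0)
    (hsum : ∑' x : Fin d → ℤ, (f x : ℝ≥0∞) = 1) (n : ℕ) :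
    (∀ z, (iterConv f n z : ℝ≥0∞) ≤ 1) ∧
    (∀ z, (iterConv f (n+1) z : ℝ≥0∞) = ∑' w, (f w : ℝ≥0∞) * (iterConv f n (z - w) : ℝ≥0∞)) := by
  induction n with
  | zero =>
    have hb : ∀ z, ((f z : ℝ≥0∞)) ≤ 1 := fun z => hsum ▸ ENNReal.le_tsum z
    refine ⟨hb, fun z => ?_⟩
    have hfin : (∑' w, (f w : ℝ≥0∞) * (f (z - w) : ℝ≥0∞)) ≠ ⊤ := by
      refine ne_top_of_le_ne_top (by simp) (le_trans (ENNReal.tsum_le_tsum fun w => ?_) hsum.le)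
      exact mul_le_of_le_one_right zero_le (hb _)
    have hs : Summable fun w => f w * f (z - w) := by
      apply ENNReal.tsum_coe_ne_top_iff_summable.mp
      simpa [ENNReal.coe_mul] using hfin
    show ((∑' w, f w * f (z - w) : ℝ≥0) : ℝ≥0∞) = _
    rw [ENNReal.coe_tsum hs]
    simp [ENNReal.coe_mul, iterConv]
  | succ n ih =>
    have hb : ∀ z, (iterConv f (n+1) z : ℝ≥0∞) ≤ 1 := by
      intro z
      rw [ih.2 z]
      refine le_trans (ENNReal.tsum_le_tsum fun w => ?_) hsum.le
      exact mul_le_of_le_one_right zero_le (ih.1 _)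
    refine ⟨hb, fun z => ?_⟩
    have hfin : (∑' w, (f w : ℝ≥0∞) * (iterConv f (n+1) (z - w) : ℝ≥0∞)) ≠ ⊤ := by
      refine ne_top_of_le_ne_top (by simp) (le_trans (ENNReal.tsum_le_tsum fun w => ?_) hsum.le)
      exact mul_le_of_le_one_right zero_le (hb _)
    have hs : Summable fun w => f w * iterConv f (n+1) (z - w) := by
      apply ENNReal.tsum_coe_ne_top_iff_summable.mp
      simpa [ENNReal.coe_mul] using hfin
    show ((∑' w, f w * iterConv f (n+1) (z - w) : ℝ≥0) : ℝ≥0∞) = _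
    rw [ENNReal.coe_tsum hs]
    simp [ENNReal.coe_mul]

lemma Hiter {d : ℕ} (f : (Fin d → ℤ) → ℝ≥0)
    (hsum : ∑' x : Fin d → ℤ, (f x : ℝ≥0∞) = 1)
    (h : (Fin d → ℤ) → ℝ) (hpos : ∀ x, 0 < h x)
    (hsumm : ∀ x, Summable (fun y => (f (y - x) : ℝ) * h y))
    (hharm : ∀ x, h x = ∑' y, (f (y - x) : ℝ) * h y)
    (n : ℕ) (x : Fin d → ℤ) :
    ENNReal.ofReal (h x) = ∑' y, (iterConv f n (y - x) : ℝ≥0∞) * ENNReal.ofReal (h y) := by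
  set H : (Fin d → ℤ) → ℝ≥0∞ := fun x => ENNReal.ofReal (h x) with hH
  have Hharm : ∀ x, H x = ∑' y, (f (y - x) : ℝ≥0∞) * H y := by
    intro x
    have : ENNReal.ofReal (h x) = ∑' y, ENNReal.ofReal ((f (y - x) : ℝ) * h y) := by
      rw [← ENNReal.ofReal_tsum_of_nonneg (fun y => mul_nonneg (NNReal.coe_nonneg _) (hpos y).le)
        (hsumm x), ← hharm x]
    simpa [hH, ENNReal.ofReal_mul (NNReal.coe_nonneg _), ENNReal.ofReal_coe_nnreal] using this
  induction n generalizing x with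
  | zero => exact Hharm x
  | succ n ih =>
    calc H x = ∑' y, (f (y - x) : ℝ≥0∞) * H y := Hharm x
    _ = ∑' y, (f (y - x) : ℝ≥0∞) * ∑' z, (iterConv f n (z - y) : ℝ≥0∞) * H z := by
        exact tsum_congr fun y => by rw [← ih y]
    _ = ∑' y, ∑' z, (f (y - x) : ℝ≥0∞) * (iterConv f n (z - y) : ℝ≥0∞) * H z := by
        exact tsum_congr fun y => by
          rw [← ENNReal.tsum_mul_left]; exact tsum_congr fun z => (mul_assoc _ _ _).symm
    _ = ∑' z, ∑' y, (f (y - x) : ℝ≥0∞) * (iterConv f n (z - y) : ℝ≥0∞) * H z := ENNReal.tsum_comm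
    _ = ∑' z, (∑' y, (f (y - x) : ℝ≥0∞) * (iterConv f n (z - y) : ℝ≥0∞)) * H z := by
        exact tsum_congr fun z => by rw [ENNReal.tsum_mul_right]
    _ = ∑' z, (iterConv f (n+1) (z - x) : ℝ≥0∞) * H z := by
        refine tsum_congr fun z => ?_
        congr 1
        rw [(iter_aux f hsum n).2 (z - x)]
        rw [← (Equiv.addRight x).tsum_eq fun y => (f (y - x) : ℝ≥0∞) * (iterConv f n (z - y) : ℝ≥0∞)]
        refine tsum_congr fun w => ?_
        simp [Equiv.coe_addRight, add_sub_cancel_right, sub_add_eq_sub_sub, sub_right_comm]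

/-- Minimal positive harmonic functions of an irreducible homogeneous random walk on
`ℤ^d` are exponential. -/
theorem minimal_harmonic_is_exponential
    (d : ℕ) (f : (Fin d → ℤ) → ℝ≥0)
    (hsum : ∑' x : Fin d → ℤ, (f x : ℝ≥0∞) = 1)
    (hirr : ∀ e : Fin d → ℤ, ∃ n : ℕ, 0 < iterConv f n e)
    (h : (Fin d → ℤ) → ℝ)
    (hpos : ∀ x, 0 < h x)
    (hsumm : ∀ x, Summable (fun y => (f (y - x) : ℝ) * h y))
    (hharm : ∀ x, h x = ∑' y, (f (y - x) : ℝ) * h y)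
    (hmin : ∀ g : (Fin d → ℤ) → ℝ,
      (∀ x, Summable (fun y => (f (y - x) : ℝ) * g y)) →
      (∀ x, g x = ∑' y, (f (y - x) : ℝ) * g y) →
      (∀ x, 0 ≤ g x ∧ g x ≤ h x) →
      ∃ c : ℝ, 0 ≤ c ∧ ∀ x, g x = c * h x) :
    ∃ u : Fin d → ℝ, ∀ x : Fin d → ℤ,
      h x = h 0 * Real.exp (∑ i, u i * (x i : ℝ)) := by
  -- Step 1: the multiplicative identity
  have key : ∀ e x : Fin d → ℤ, h (x + e) * h 0 = h e * h x := by
    intro e x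
    obtain ⟨n, hn⟩ := hirr e
    set c0 : ℝ := (iterConv f n e : ℝ) with hc0def
    have hc0 : 0 < c0 := hn
    -- the bound c0 * h (x + e) ≤ h x
    have bound : ∀ z, c0 * h (z + e) ≤ h z := by
      intro z
      have h1 := Hiter f hsum h hpos hsumm hharm n z
      have h2 : (iterConv f n (z + e - z) : ℝ≥0∞) * ENNReal.ofReal (h (z + e)) ≤
          ∑' y, (iterConv f n (y - z) : ℝ≥0∞) * ENNReal.ofReal (h y) :=
        ENNReal.le_tsum (z + e)
      rw [← h1] at h2
      have h3 : z + e - z = e := by abel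
      rw [h3] at h2
      have h4 : ENNReal.ofReal (c0 * h (z + e)) ≤ ENNReal.ofReal (h z) := by
        rwa [ENNReal.ofReal_mul (NNReal.coe_nonneg _), ENNReal.ofReal_coe_nnreal]
      exact (ENNReal.ofReal_le_ofReal_iff (hpos z).le).mp h4
    -- apply minimality to g := fun z => c0 * h (z + e)
    obtain ⟨c, -, hc⟩ := hmin (fun z => c0 * h (z + e))
      (by
        intro z
        have base := hsumm (z + e)
        have comp : Summable (fun y => (f (y - z) : ℝ) * h (y + e)) := by
          have := (Equiv.addRight e).summable_iff.mpr base
          refine this.congr fun y => ?_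
          simp [Equiv.coe_addRight, add_sub_add_right_eq_sub]
        exact (comp.mul_left c0).congr fun y => (mul_left_comm _ _ _))
      (by
        intro z
        have e1 : ∑' y, (f (y - z) : ℝ) * (c0 * h (y + e)) =
            c0 * ∑' y, (f (y - z) : ℝ) * h (y + e) := by
          rw [← tsum_mul_left]; exact tsum_congr fun y => (mul_left_comm _ _ _).symm
        have e2 : ∑' y, (f (y - z) : ℝ) * h (y + e) = h (z + e) := by
          rw [hharm (z + e),
            ← (Equiv.addRight e).tsum_eq fun y => (f (y - (z + e)) : ℝ) * h y]
          exact tsum_congr fun y => by simp [Equiv.coe_addRight, add_sub_add_right_eq_sub]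
        rw [e1, e2])
      (fun z => ⟨mul_nonneg hc0.le (hpos _).le, bound z⟩)
    have h1 := hc x
    have h2 := hc 0
    simp only [zero_add] at h2
    apply mul_left_cancel₀ (ne_of_gt hc0)
    calc c0 * (h (x + e) * h 0) = (c0 * h (x + e)) * h 0 := by ring
    _ = (c * h x) * h 0 := by rw [h1]
    _ = (c * h 0) * h x := by ring
    _ = (c0 * h e) * h x := by rw [h2]
    _ = c0 * (h e * h x) := by ring
  -- Step 2: build the linear form
  have h0pos := hpos 0
  set ψ : (Fin d → ℤ) → ℝ := fun x => Real.log (h x / h 0) with hψ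
  have hψadd : ∀ a b : Fin d → ℤ, ψ (a + b) = ψ a + ψ b := by
    intro a b
    have hmul : h (a + b) / h 0 = (h a / h 0) * (h b / h 0) := by
      have hk := key b a
      rw [div_mul_div_comm, div_eq_div_iff (ne_of_gt h0pos) (ne_of_gt (mul_pos h0pos h0pos))]
      linear_combination h 0 * hk
    simp only [hψ, hmul]
    rw [Real.log_mul (ne_of_gt (div_pos (hpos a) h0pos)) (ne_of_gt (div_pos (hpos b) h0pos))]
  let Ψ : (Fin d → ℤ) →+ ℝ := AddMonoidHom.mk' ψ hψadd
  refine ⟨fun i => ψ (Pi.single i 1), fun x => ?_⟩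
  have hlin : ∑ i, ψ (Pi.single i 1) * (x i : ℝ) = ψ x := by
    have hx : x = ∑ i, Pi.single i (x i) := (Finset.univ_sum_single x).symm
    have : ψ x = Ψ x := rfl
    rw [this]
    rw [show Ψ x = ∑ i, Ψ (Pi.single i (x i)) by rw [← map_sum]; exact congrArg Ψ hx]
    refine Finset.sum_congr rfl fun i _ => ?_
    have hsingle : Pi.single i (x i) = (x i) • (Pi.single i (1:ℤ) : Fin d → ℤ) := by
      rw [← Pi.single_smul]; simp
    rw [hsingle, map_zsmul, zsmul_eq_mul]
    exact (mul_comm _ _)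
  rw [hlin]
  have : Real.exp (ψ x) = h x / h 0 := Real.exp_log (div_pos (hpos x) h0pos)
  rw [this]
  field_simp
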